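/- arXiv:1209.5240 — 5 statements merged into one kernel-verified Lean document; each statement's English description precedes it below -/
import Mathlib

section
/- Let m > 1, p > 0, a > 0 and k ≥ 1 be real numbers. Then lim_{z→∞} z^{a+k} ∫_0^1 λ^{a−1} (λ/(m−λ))^k exp(−(λ/(m−λ))·p·z) dλ = m^a · Γ(a+k) · p^{−(a+k)}, where Γ denotes the Gamma function. -/
/-!
Substituting `l = m s / (c + s)` with `c = p z` maps `s ∈ (0, c / (m - 1))` onto `l ∈ (0, 1)`
and turns `l / (m - l)` into `s / c`, so the rescaled integral becomes
`m ^ a p ^ (-(a + k)) ∫₀^{c/(m-1)} s ^ (a + k - 1) e ^ (-s) (1 + s / c) ^ (-(a + 1)) ds`.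
The last factor lies in `(0, 1]` and tends to `1` pointwise, so by dominated convergence the
integral tends to `Γ(a + k)`.
-/

open MeasureTheory Filter Topology Real Set

section Substitution

variable {m c : ℝ}

theorem image_mul_div_add_Ioo (hm : 1 < m) (hc : 0 < c) :
    (fun s => m * s / (c + s)) '' Ioo 0 (c / (m - 1)) = Ioo 0 1 := by
  have hm1 : 0 < m - 1 := by linarith
  ext l
  constructor
  · rintro ⟨s, ⟨hs0, hsT⟩, rfl⟩
    have hcs : 0 < c + s := by linarith
    refine ⟨by positivity, (div_lt_one hcs).2 ?_⟩
    nlinarith [(lt_div_iff₀ hm1).mp hsT]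
  · rintro ⟨hl0, hl1⟩
    have hml : 0 < m - l := by linarith
    refine ⟨c * l / (m - l), ⟨by positivity, ?_⟩, ?_⟩
    · rw [div_lt_div_iff₀ hml hm1]
      nlinarith [mul_pos hc (show 0 < 1 - l by linarith)]
    · field_simp
      ring

theorem injOn_mul_div_add (hm : m ≠ 0) (hc : 0 < c) :
    InjOn (fun s => m * s / (c + s)) (Ioi 0) := by
  intro s₁ hs₁ s₂ hs₂ heq
  have hcs₁ : 0 < c + s₁ := by linarith [mem_Ioi.1 hs₁]
  have hcs₂ : 0 < c + s₂ := by linarith [mem_Ioi.1 hs₂]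
  have h := (div_eq_div_iff hcs₁.ne' hcs₂.ne').mp heq
  have : m * c * (s₁ - s₂) = 0 := by linear_combination h
  have hmc : m * c ≠ 0 := mul_ne_zero hm hc.ne'
  linarith [(mul_eq_zero.mp this).resolve_left hmc]

theorem hasDerivAt_mul_div_add {s : ℝ} (hcs : c + s ≠ 0) :
    HasDerivAt (fun s => m * s / (c + s)) (m * c / (c + s) ^ 2) s := by
  refine (((hasDerivAt_id s).const_mul m).div ((hasDerivAt_id s).const_add c) hcs).congr_deriv ?_
  simp only [id]
  ring

theorem integrand_comp_mul_div_add (a k : ℝ) (hm : 0 < m) (hc : 0 < c) {s : ℝ} (hs : 0 < s) :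
    (m * s / (c + s)) ^ (a - 1) * (m * s / (c + s) / (m - m * s / (c + s))) ^ k *
        rexp (-(m * s / (c + s) / (m - m * s / (c + s))) * c) * (m * c / (c + s) ^ 2)
      = m ^ a * c ^ (-(a + k)) * (s ^ (a + k - 1) * rexp (-s) * (1 + s / c) ^ (-(a + 1))) := by
  have hcs : 0 < c + s := by linarith
  have hden : m - m * s / (c + s) = m * c / (c + s) := by
    field_simp
    ring
  have hratio : m * s / (c + s) / (m - m * s / (c + s)) = s / c := by
    rw [hden]
    field_simp
  have h1sc : 1 + s / c = (c + s) / c := one_add_div hc.ne'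
  rw [hratio, h1sc, neg_mul, div_mul_cancel₀ _ hc.ne']
  refine log_injOn_pos (mem_Ioi.2 (by positivity)) (mem_Ioi.2 (by positivity)) ?_
  simp (disch := positivity) only [log_mul, log_div, log_rpow, log_exp, log_pow]
  push_cast
  ring

theorem integral_Ioo_zero_one_eq_integral_Ioo (a k : ℝ) (hm : 1 < m) (hc : 0 < c) :
    ∫ l in Ioo 0 1, l ^ (a - 1) * (l / (m - l)) ^ k * rexp (-(l / (m - l)) * c)
      = m ^ a * c ^ (-(a + k)) *
          ∫ s in Ioo 0 (c / (m - 1)), s ^ (a + k - 1) * rexp (-s) * (1 + s / c) ^ (-(a + 1)) := by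
  have hm0 : 0 < m := by linarith
  rw [← image_mul_div_add_Ioo hm hc,
    integral_image_eq_integral_abs_deriv_smul measurableSet_Ioo
      (fun s hs => (hasDerivAt_mul_div_add (by linarith [hs.1])).hasDerivWithinAt)
      ((injOn_mul_div_add hm0.ne' hc).mono Ioo_subset_Ioi_self),
    ← integral_const_mul]
  refine setIntegral_congr_fun measurableSet_Ioo fun s hs => ?_
  have hcs : 0 < c + s := by linarith [hs.1]
  rw [smul_eq_mul, abs_of_pos (by positivity), mul_comm, integrand_comp_mul_div_add a k hm0 hc hs.1]

theorem tendsto_one_add_div_rpow (s r : ℝ) :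
    Tendsto (fun c => (1 + s / c) ^ r) atTop (𝓝 1) := by
  have h : Tendsto (fun c => 1 + s / c) atTop (𝓝 1) := by
    simpa using ((tendsto_const_nhds (x := s)).div_atTop tendsto_id).const_add 1
  simpa using h.rpow_const (Or.inl one_ne_zero)

theorem tendsto_integral_Ioo_rpow_mul_exp_neg_mul_one_add_div_rpow {u r d : ℝ} (hu : 0 < u)
    (hr : r ≤ 0) (hd : 0 < d) :
    Tendsto (fun c => ∫ s in Ioo 0 (c / d), s ^ (u - 1) * rexp (-s) * (1 + s / c) ^ r) atTop
      (𝓝 (Gamma u)) := by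
  let g : ℝ → ℝ → ℝ := fun c s => s ^ (u - 1) * rexp (-s) * (1 + s / c) ^ r
  have hIoo (c : ℝ) :
      ∫ s in Ioi 0, (Iio (c / d)).indicator (g c) s = ∫ s in Ioo 0 (c / d), g c s := by
    rw [integral_indicator measurableSet_Iio, Measure.restrict_restrict measurableSet_Iio,
      Iio_inter_Ioi]
  refine Tendsto.congr hIoo ?_
  rw [Gamma_eq_integral hu]
  refine tendsto_integral_filter_of_dominated_convergence (fun s => rexp (-s) * s ^ (u - 1))
    (.of_forall fun c =>
      (Measurable.aestronglyMeasurable (by fun_prop)).indicator measurableSet_Iio)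
    ?_ (GammaIntegral_convergent hu) ?_
  · filter_upwards [eventually_gt_atTop 0] with c hc
    filter_upwards [ae_restrict_mem measurableSet_Ioi] with s (hs : 0 < s)
    rw [norm_indicator_eq_indicator_norm]
    refine indicator_le_self' (fun _ _ => by positivity) s |>.trans ?_
    have hle : (1 + s / c) ^ r ≤ 1 :=
      rpow_le_one_of_one_le_of_nonpos (le_add_of_nonneg_right (by positivity)) hr
    rw [norm_of_nonneg (by positivity), mul_comm (rexp _)]
    exact mul_le_of_le_one_right (by positivity) hle
  · filter_upwards [ae_restrict_mem measurableSet_Ioi] with s (hs : 0 < s)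
    have hmem : ∀ᶠ c in atTop, s ∈ Iio (c / d) := by
      filter_upwards [eventually_gt_atTop (s * d)] with c hc
      exact (lt_div_iff₀ hd).2 hc
    have hlim : Tendsto (fun c => g c s) atTop (𝓝 (rexp (-s) * s ^ (u - 1))) := by
      simpa [mul_comm (rexp _)] using
        (tendsto_one_add_div_rpow s r).const_mul (s ^ (u - 1) * rexp (-s))
    exact hlim.congr' (hmem.mono fun c hc => (indicator_of_mem hc _).symm)

/-- Lemma B.1 of the paper: for `m > 1`, `p > 0`, `a > 0`, `k ≥ 1`,
`z^(a+k) ∫₀¹ λ^(a-1) (λ/(m-λ))^k e^{-(λ/(m-λ)) p z} dλ → m^a Γ(a+k) p^{-(a+k)}`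
as `z → ∞`. -/
theorem tendsto_zpow_mul_integral_gamma
    (m p a k : ℝ) (hm : 1 < m) (hp : 0 < p) (ha : 0 < a) (hk : 1 ≤ k) :
    Tendsto
      (fun z : ℝ => z ^ (a + k) *
        ∫ l in Set.Ioo (0:ℝ) 1,
          l ^ (a - 1) * (l / (m - l)) ^ k * Real.exp (-(l / (m - l)) * p * z))
      atTop
      (𝓝 (m ^ a * Real.Gamma (a + k) * p ^ (-(a + k)))) := by
  have hpz : Tendsto (fun z => p * z) atTop atTop := tendsto_id.const_mul_atTop hp
  have h := ((tendsto_integral_Ioo_rpow_mul_exp_neg_mul_one_add_div_rpow (u := a + k)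
    (r := -(a + 1)) (by linarith) (by linarith) (sub_pos.2 hm)).comp hpz).const_mul
    (m ^ a * p ^ (-(a + k)))
  rw [mul_right_comm]
  refine h.congr' ?_
  filter_upwards [eventually_gt_atTop 0] with z hz
  simp_rw [mul_assoc (-(_ / (m - _))) p z]
  rw [Function.comp_apply, integral_Ioo_zero_one_eq_integral_Ioo a k hm (mul_pos hp hz),
    mul_rpow hp.le hz.le, rpow_neg hz.le]
  field_simp
end Substitution
end

section
/- Let k ≥ 1 be an integer, let M be a symmetric positive definite k×k real matrix, let σ > 0, a > 0, b > 0, let n ≥ 0, and let ρ > b/(b+n). Define the robust prior density on ℝ^k by π^R(β) = ∫_0^∞ N_k(β | 0, g σ² M⁻¹) · p^R(g) dg, where p^R(g) = a[ρ(b+n)]^a (g+b)^{−(a+1)} for g > ρ(b+n)−b and 0 otherwise. Write ‖β‖² = βᵀ M β and c = (a·Γ(a))^{1/a}, and define the Student-type density S(β) = (Γ(a + k/2)/Γ(a)) · (2π)^{−k/2} · (c σ² ρ (b+n))^{−k/2} · (det M)^{1/2} · (1 + ‖β‖²/(2 c ρ σ² (b+n)))^{−(a+k/2)}. Then π^R(β)/S(β)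 → 1 as ‖β‖² → ∞. -/
open MeasureTheory Filter Topology Real Matrix



/-- The multivariate normal density `N_k(x | 0, Σ)` on `ℝ^k`. -/
noncomputable def normalDensity {k : ℕ} (S : Matrix (Fin k) (Fin k) ℝ)
    (x : Fin k → ℝ) : ℝ :=
  (2 * Real.pi) ^ (-(k : ℝ) / 2) * S.det ^ (-(1 : ℝ) / 2) *
    Real.exp (-(x ⬝ᵥ S⁻¹ *ᵥ x) / 2)

/-- The mixing density of the robust prior. -/
noncomputable def robustMixing (a b n ρ : ℝ) (g : ℝ) : ℝ :=
  if ρ * (b + n) - b < g then a * (ρ * (b + n)) ^ a * (g + b) ^ (-(a + 1)) else 0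

lemma image_div_Ioo (T g0 : ℝ) (hT : 0 < T) (hg0 : 0 < g0) :
    (fun u : ℝ => T / u) '' Set.Ioo 0 (T / g0) = Set.Ioi g0 := by
  ext y
  constructor
  · rintro ⟨u, ⟨hu0, hu1⟩, rfl⟩
    have h : u * g0 < T := by
      have := (lt_div_iff₀ hg0).mp hu1
      linarith
    exact Set.mem_Ioi.mpr ((lt_div_iff₀ hu0).mpr (by nlinarith))
  · intro hy
    have hy0 : 0 < y := lt_trans hg0 hy
    refine ⟨T / y, ⟨div_pos hT hy0, ?_⟩, ?_⟩
    · exact div_lt_div_of_pos_left hT hg0 hy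
    · field_simp

lemma subst_integrand (a κ b T u : ℝ) (hb : 0 < b) (hT : 0 < T) (hu : 0 < u) :
    T ^ (a + κ) * ((T / u ^ 2) * ((T / u) ^ (-κ) * (T / u + b) ^ (-(a + 1)) *
        Real.exp (-(T / (T / u))))) =
      u ^ (a + κ - 1) * Real.exp (-u) * (T / (T + b * u)) ^ (a + 1) := by
  have hu' : u ≠ 0 := ne_of_gt hu
  have hT' : T ≠ 0 := ne_of_gt hT
  have hTbu : 0 < T + b * u := by positivity
  have h1 : T / (T / u) = u := by field_simp
  have h2 : T / u + b = (T + b * u) / u := by field_simp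
  have h3 : (T / u) ^ (-κ) = T ^ (-κ) * u ^ κ := by
    rw [div_rpow hT.le hu.le, Real.rpow_neg hu.le, division_def, inv_inv]
  have h4 : ((T + b * u) / u) ^ (-(a+1)) = (T + b * u) ^ (-(a+1)) * u ^ (a+1) := by
    rw [div_rpow hTbu.le hu.le, Real.rpow_neg hu.le, division_def, inv_inv]
  have h5 : (T / (T + b * u)) ^ (a + 1) = T ^ (a+1) * (T + b * u) ^ (-(a+1)) := by
    rw [div_rpow hT.le hTbu.le, Real.rpow_neg hTbu.le, div_eq_mul_inv]
  have h6 : T / u ^ 2 = T * u ^ (-2 : ℝ) := by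
    rw [Real.rpow_neg hu.le, ← Real.rpow_natCast u 2, div_eq_mul_inv]
    norm_num
  have e1 : T ^ (a + κ) * T * T ^ (-κ) = T ^ (a + 1) := by
    have hκ : T ^ κ * T ^ (-κ) = 1 := by rw [← Real.rpow_add hT]; simp
    rw [Real.rpow_add hT a κ, Real.rpow_add hT a 1, Real.rpow_one]
    calc T ^ a * T ^ κ * T * T ^ (-κ) = T ^ a * T * (T ^ κ * T ^ (-κ)) := by ring
      _ = T ^ a * T := by rw [hκ, mul_one]
  have e2 : u ^ (-2 : ℝ) * u ^ κ * u ^ (a + 1) = u ^ (a + κ - 1) := by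
    rw [← Real.rpow_add hu, ← Real.rpow_add hu]
    ring_nf
  rw [h1, h2, h3, h4, h5, h6]
  calc T ^ (a + κ) * (T * u ^ (-2:ℝ) * (T ^ (-κ) * u ^ κ * ((T + b*u) ^ (-(a+1)) * u ^ (a+1)) *
        Real.exp (-u)))
      = (T ^ (a + κ) * T * T ^ (-κ)) * (u ^ (-2:ℝ) * u ^ κ * u ^ (a+1)) *
        ((T + b*u) ^ (-(a+1)) * Real.exp (-u)) := by ring
    _ = _ := by rw [e1, e2]; ring

lemma core_limit (a κ b C g0 : ℝ) (ha : 0 < a) (hκ : 0 ≤ κ) (hb : 0 < b)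
    (hC : 0 < C) (hg0 : 0 < g0) :
    Tendsto (fun t : ℝ => (C * t) ^ (a + κ) *
        ∫ g in Set.Ioi g0, g ^ (-κ) * (g + b) ^ (-(a + 1)) * Real.exp (-(C * t) / g))
      atTop (𝓝 (Real.Gamma (a + κ))) := by
  have hα : 0 < a + κ := by linarith
  set G : ℝ → ℝ → ℝ := fun t u =>
    Set.indicator (Set.Ioo 0 (C * t / g0))
      (fun u => u ^ (a + κ - 1) * Real.exp (-u) * (C * t / (C * t + b * u)) ^ (a + 1)) u with hG
  have hmain : Tendsto (fun t => ∫ u in Set.Ioi (0:ℝ), G t u) atTop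
      (𝓝 (∫ u in Set.Ioi (0:ℝ), Real.exp (-u) * u ^ (a + κ - 1))) := by
    apply tendsto_integral_filter_of_dominated_convergence
      (bound := fun u => Real.exp (-u) * u ^ (a + κ - 1))
    · filter_upwards with t
      apply Measurable.aestronglyMeasurable
      apply Measurable.indicator _ measurableSet_Ioo
      fun_prop
    · filter_upwards [eventually_gt_atTop (0:ℝ)] with t ht
      rw [ae_restrict_iff' measurableSet_Ioi]
      filter_upwards with u hu
      have hu0 : (0:ℝ) < u := hu
      have hT : 0 < C * t := by positivity
      have hTbu : 0 < C * t + b * u := by positivity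
      simp only [hG]
      by_cases hmem : u ∈ Set.Ioo 0 (C * t / g0)
      · rw [Set.indicator_of_mem hmem]
        have h1 : (0:ℝ) ≤ u ^ (a + κ - 1) * Real.exp (-u) * (C * t / (C * t + b * u)) ^ (a + 1) := by
          positivity
        rw [Real.norm_eq_abs, abs_of_nonneg h1]
        have h2 : (C * t / (C * t + b * u)) ^ (a + 1) ≤ 1 := by
          apply Real.rpow_le_one (by positivity)
          · rw [div_le_one hTbu]; nlinarith
          · linarith
        calc u ^ (a + κ - 1) * Real.exp (-u) * (C * t / (C * t + b * u)) ^ (a + 1)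
            ≤ u ^ (a + κ - 1) * Real.exp (-u) * 1 := by
              apply mul_le_mul_of_nonneg_left h2 (by positivity)
          _ = Real.exp (-u) * u ^ (a + κ - 1) := by ring
      · rw [Set.indicator_of_notMem hmem]
        simp only [norm_zero]
        positivity
    · exact Real.GammaIntegral_convergent hα
    · rw [ae_restrict_iff' measurableSet_Ioi]
      filter_upwards with u hu
      have hu0 : (0:ℝ) < u := hu
      have hev : ∀ᶠ t : ℝ in atTop,
          G t u = u ^ (a + κ - 1) * Real.exp (-u) * (C * t / (C * t + b * u)) ^ (a + 1) := by
        filter_upwards [eventually_gt_atTop (u * g0 / C)] with t ht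
        apply Set.indicator_of_mem
        constructor
        · exact hu0
        · rw [lt_div_iff₀ hg0]
          have := (div_lt_iff₀ hC).mp ht
          nlinarith
      rw [show Real.exp (-u) * u ^ (a + κ - 1)
          = u ^ (a + κ - 1) * Real.exp (-u) * (1:ℝ) ^ (a+1) by rw [Real.one_rpow]; ring]
      apply Tendsto.congr' (Filter.EventuallyEq.symm hev)
      apply Tendsto.const_mul
      apply Tendsto.rpow_const _ (Or.inl one_ne_zero)
      have hden : Tendsto (fun t : ℝ => (C * t + b * u) / (C * t)) atTop (𝓝 1) := by
        have h0 : Tendsto (fun t : ℝ => b * u / (C * t)) atTop (𝓝 0) :=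
          Tendsto.div_atTop tendsto_const_nhds (tendsto_id.const_mul_atTop hC)
        have : (fun t : ℝ => (C * t + b * u) / (C * t))
            =ᶠ[atTop] fun t => 1 + b * u / (C * t) := by
          filter_upwards [eventually_gt_atTop (0:ℝ)] with t ht
          have : C * t ≠ 0 := by positivity
          field_simp
        rw [tendsto_congr' this]
        simpa using tendsto_const_nhds.add h0
      have := hden.inv₀ one_ne_zero
      simp only [inv_one] at this
      refine Tendsto.congr' ?_ this
      filter_upwards [eventually_gt_atTop (0:ℝ)] with t ht
      have h1 : C * t ≠ 0 := by positivity
      have h2 : C * t + b * u ≠ 0 := by positivity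
      field_simp
  have heq : (fun t : ℝ => (C * t) ^ (a + κ) *
      ∫ g in Set.Ioi g0, g ^ (-κ) * (g + b) ^ (-(a + 1)) * Real.exp (-(C * t) / g))
      =ᶠ[atTop] fun t => ∫ u in Set.Ioi (0:ℝ), G t u := by
    filter_upwards [eventually_gt_atTop (0:ℝ)] with t ht
    have hT : 0 < C * t := by positivity
    have himg := image_div_Ioo (C * t) g0 hT hg0
    have hderiv : ∀ x ∈ Set.Ioo (0:ℝ) (C * t / g0),
        HasDerivWithinAt (fun u : ℝ => C * t / u) (-(C * t) / x ^ 2)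
          (Set.Ioo (0:ℝ) (C * t / g0)) x := by
      intro x hx
      have hx0 : x ≠ 0 := ne_of_gt hx.1
      rw [show (fun u : ℝ => C * t / u) = fun u => (C * t) * u⁻¹ from
        funext fun u => div_eq_mul_inv _ _,
        show -(C * t) / x ^ 2 = (C * t) * (-(x ^ 2)⁻¹) by rw [div_eq_mul_inv]; ring]
      exact ((hasDerivAt_inv hx0).const_mul (C * t)).hasDerivWithinAt
    have hinj : Set.InjOn (fun u : ℝ => C * t / u) (Set.Ioo (0:ℝ) (C * t / g0)) := by
      intro x hx y hy hxy
      have hx0 : x ≠ 0 := ne_of_gt hx.1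
      have hy0 : y ≠ 0 := ne_of_gt hy.1
      have hT0 : C * t ≠ 0 := ne_of_gt hT
      field_simp at hxy
      exact hxy.symm
    calc (C * t) ^ (a + κ) *
        ∫ g in Set.Ioi g0, g ^ (-κ) * (g + b) ^ (-(a + 1)) * Real.exp (-(C * t) / g)
        = (C * t) ^ (a + κ) * ∫ u in Set.Ioo (0:ℝ) (C * t / g0),
            |(-(C * t) / u ^ 2)| • ((C * t / u) ^ (-κ) * (C * t / u + b) ^ (-(a + 1)) *
              Real.exp (-(C * t) / (C * t / u))) := by
          rw [← himg, integral_image_eq_integral_abs_deriv_smul measurableSet_Ioo hderiv hinj]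
      _ = ∫ u in Set.Ioo (0:ℝ) (C * t / g0),
            u ^ (a + κ - 1) * Real.exp (-u) * (C * t / (C * t + b * u)) ^ (a + 1) := by
          rw [← integral_const_mul]
          apply setIntegral_congr_fun measurableSet_Ioo
          intro u hu
          have hu0 : 0 < u := hu.1
          have habs : |(-(C * t) / u ^ 2)| = C * t / u ^ 2 := by
            rw [abs_div, abs_neg, abs_of_pos hT, abs_of_pos (by positivity : (0:ℝ) < u ^ 2)]
          simp only [smul_eq_mul]
          rw [habs, show -(C * t) / (C * t / u) = -(C * t / (C * t / u)) by ring]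
          exact subst_integrand a κ b (C * t) u hb hT hu0
      _ = ∫ u in Set.Ioi (0:ℝ), G t u := by
          rw [hG]
          rw [setIntegral_indicator measurableSet_Ioo,
            Set.inter_eq_right.mpr Set.Ioo_subset_Ioi_self]
  rw [tendsto_congr' heq]
  rw [Real.Gamma_eq_integral hα]
  exact hmain

lemma normalDensity_eval {k : ℕ} (M : Matrix (Fin k) (Fin k) ℝ) (hM : M.PosDef)
    (σ g : ℝ) (hσ : 0 < σ) (hg : 0 < g) (β : Fin k → ℝ) :
    normalDensity ((g * σ ^ 2) • M⁻¹) β =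
      (2 * Real.pi) ^ (-(k : ℝ) / 2) * M.det ^ ((1 : ℝ) / 2) *
        ((σ ^ 2 : ℝ) ^ (-(k : ℝ) / 2) * g ^ (-(k : ℝ) / 2)) *
        Real.exp (-((1 / (2 * σ ^ 2)) * (β ⬝ᵥ M *ᵥ β)) / g) := by
  have hdet : 0 < M.det := hM.det_pos
  have hc : (0 : ℝ) < g * σ ^ 2 := by positivity
  have hc' : (g * σ ^ 2 : ℝ) ≠ 0 := ne_of_gt hc
  have hinv : ((g * σ ^ 2) • M⁻¹)⁻¹ = (g * σ ^ 2)⁻¹ • M := by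
    apply Matrix.inv_eq_right_inv
    rw [Matrix.smul_mul, Matrix.mul_smul, smul_smul, mul_inv_cancel₀ hc',
      Matrix.nonsing_inv_mul M (isUnit_iff_ne_zero.mpr (ne_of_gt hdet)), one_smul]
  have hquad : β ⬝ᵥ ((g * σ ^ 2)⁻¹ • M) *ᵥ β = (g * σ ^ 2)⁻¹ * (β ⬝ᵥ M *ᵥ β) := by
    rw [Matrix.smul_mulVec, dotProduct_smul, smul_eq_mul]
  have hdet2 : ((g * σ ^ 2) • M⁻¹).det = (g * σ ^ 2) ^ k * M.det⁻¹ := by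
    rw [Matrix.det_smul, Fintype.card_fin, Matrix.det_nonsing_inv, Ring.inverse_eq_inv]
  have hpow : ((g * σ ^ 2) ^ k * M.det⁻¹ : ℝ) ^ (-(1 : ℝ) / 2) =
      M.det ^ ((1 : ℝ) / 2) * ((σ ^ 2 : ℝ) ^ (-(k : ℝ) / 2) * g ^ (-(k : ℝ) / 2)) := by
    rw [Real.mul_rpow (by positivity) (by positivity)]
    have h1 : ((g * σ ^ 2 : ℝ) ^ k) ^ (-(1 : ℝ) / 2) =
        (σ ^ 2 : ℝ) ^ (-(k : ℝ) / 2) * g ^ (-(k : ℝ) / 2) := by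
      rw [← Real.rpow_natCast (g * σ ^ 2) k, ← Real.rpow_mul hc.le,
        Real.mul_rpow hg.le (by positivity)]
      rw [show (k : ℝ) * (-(1 : ℝ) / 2) = -(k : ℝ) / 2 by ring]
      ring
    have h2 : (M.det⁻¹ : ℝ) ^ (-(1 : ℝ) / 2) = M.det ^ ((1 : ℝ) / 2) := by
      rw [← Real.rpow_neg_one M.det, ← Real.rpow_mul hdet.le]
      norm_num
    rw [h1, h2]
    ring
  have hexp : -((g * σ ^ 2)⁻¹ * (β ⬝ᵥ M *ᵥ β)) / 2 =
      -((1 / (2 * σ ^ 2)) * (β ⬝ᵥ M *ᵥ β)) / g := by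
    field_simp
  rw [normalDensity, hinv, hquad, hdet2, hpow, hexp]
  ring

lemma numerator_eq {k : ℕ} (M : Matrix (Fin k) (Fin k) ℝ) (hM : M.PosDef)
    (σ a b n ρ : ℝ) (hσ : 0 < σ) (ha : 0 < a) (hg0 : 0 < ρ * (b + n) - b)
    (β : Fin k → ℝ) :
    ∫ g in Set.Ioi (0 : ℝ), normalDensity ((g * σ ^ 2) • M⁻¹) β * robustMixing a b n ρ g =
      ((2 * Real.pi) ^ (-(k : ℝ) / 2) * M.det ^ ((1 : ℝ) / 2) *
          (σ ^ 2 : ℝ) ^ (-(k : ℝ) / 2) * (a * (ρ * (b + n)) ^ a)) *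
        ∫ g in Set.Ioi (ρ * (b + n) - b),
          g ^ (-((k : ℝ) / 2)) * (g + b) ^ (-(a + 1)) *
            Real.exp (-((1 / (2 * σ ^ 2)) * (β ⬝ᵥ M *ᵥ β)) / g) := by
  have hmix : ∀ g : ℝ, robustMixing a b n ρ g =
      Set.indicator (Set.Ioi (ρ * (b + n) - b))
        (fun g => a * (ρ * (b + n)) ^ a * (g + b) ^ (-(a + 1))) g := by
    intro g
    unfold robustMixing
    rw [Set.indicator_apply]
    rfl
  have step1 : ∫ g in Set.Ioi (0 : ℝ),
      normalDensity ((g * σ ^ 2) • M⁻¹) β * robustMixing a b n ρ g =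
      ∫ g in Set.Ioi (ρ * (b + n) - b),
        normalDensity ((g * σ ^ 2) • M⁻¹) β *
          (a * (ρ * (b + n)) ^ a * (g + b) ^ (-(a + 1))) := by
    simp_rw [hmix]
    rw [setIntegral_congr_fun measurableSet_Ioi
      (fun g _ => (Set.indicator_mul_right _ (fun g => normalDensity ((g * σ ^ 2) • M⁻¹) β)
        (fun g => a * (ρ * (b + n)) ^ a * (g + b) ^ (-(a + 1)))).symm)]
    rw [setIntegral_indicator measurableSet_Ioi, Set.Ioi_inter_Ioi,
      sup_eq_right.mpr hg0.le]
  rw [step1]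
  rw [show ((2 * Real.pi) ^ (-(k : ℝ) / 2) * M.det ^ ((1 : ℝ) / 2) *
          (σ ^ 2 : ℝ) ^ (-(k : ℝ) / 2) * (a * (ρ * (b + n)) ^ a)) *
        ∫ g in Set.Ioi (ρ * (b + n) - b),
          g ^ (-((k : ℝ) / 2)) * (g + b) ^ (-(a + 1)) *
            Real.exp (-((1 / (2 * σ ^ 2)) * (β ⬝ᵥ M *ᵥ β)) / g)
      = ∫ g in Set.Ioi (ρ * (b + n) - b),
          ((2 * Real.pi) ^ (-(k : ℝ) / 2) * M.det ^ ((1 : ℝ) / 2) *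
            (σ ^ 2 : ℝ) ^ (-(k : ℝ) / 2) * (a * (ρ * (b + n)) ^ a)) *
          (g ^ (-((k : ℝ) / 2)) * (g + b) ^ (-(a + 1)) *
            Real.exp (-((1 / (2 * σ ^ 2)) * (β ⬝ᵥ M *ᵥ β)) / g)) from
      (integral_const_mul _ _).symm]
  apply setIntegral_congr_fun measurableSet_Ioi
  intro g hg
  have hgpos : 0 < g := lt_trans hg0 hg
  dsimp only
  rw [normalDensity_eval M hM σ g hσ hgpos β]
  rw [show -((k : ℝ)) / 2 = -((k : ℝ) / 2) by ring]
  ring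

/-- Proposition 1 of the paper: the robust prior behaves in the tails like a
multivariate Student distribution with `2a` degrees of freedom. -/
theorem robustPrior_tendsto_student
    (k : ℕ) (hk : 1 ≤ k) (M : Matrix (Fin k) (Fin k) ℝ) (hM : M.PosDef)
    (σ a b n ρ : ℝ) (hσ : 0 < σ) (ha : 0 < a) (hb : 0 < b) (hn : 0 ≤ n)
    (hρ : b / (b + n) < ρ) :
    Tendsto
      (fun β : Fin k → ℝ =>
        (∫ g in Set.Ioi (0:ℝ),
            normalDensity ((g * σ ^ 2) • M⁻¹) β * robustMixing a b n ρ g) /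
        ((Real.Gamma (a + (k : ℝ) / 2) / Real.Gamma a) *
          (2 * Real.pi) ^ (-(k : ℝ) / 2) *
          ((a * Real.Gamma a) ^ (1 / a) * σ ^ 2 * ρ * (b + n)) ^ (-(k : ℝ) / 2) *
          M.det ^ ((1 : ℝ) / 2) *
          (1 + (β ⬝ᵥ M *ᵥ β) /
              (2 * (a * Real.Gamma a) ^ (1 / a) * ρ * σ ^ 2 * (b + n))) ^
            (-(a + (k : ℝ) / 2))))
      (Filter.comap (fun β : Fin k → ℝ => β ⬝ᵥ M *ᵥ β) atTop)
      (𝓝 1) := by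
  have hbn : (0:ℝ) < b + n := by linarith
  have hg0 : 0 < ρ * (b + n) - b := by
    have := (div_lt_iff₀ hbn).mp hρ
    linarith
  have hρpos : 0 < ρ := lt_trans (div_pos hb hbn) hρ
  have hΓa : 0 < Real.Gamma a := Real.Gamma_pos_of_pos ha
  have hα : (0:ℝ) < a + (k:ℝ)/2 := by positivity
  have hΓα : 0 < Real.Gamma (a + (k:ℝ)/2) := Real.Gamma_pos_of_pos hα
  set c : ℝ := (a * Real.Gamma a) ^ (1/a) with hcdef
  have hc : 0 < c := Real.rpow_pos_of_pos (by positivity) _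
  set R : ℝ := ρ * (b + n) with hRdef
  have hR : 0 < R := by positivity
  set g0 : ℝ := ρ * (b + n) - b with hg0def
  set C : ℝ := 1 / (2 * σ ^ 2) with hCdef
  have hC : 0 < C := by positivity
  set d : ℝ := 2 * c * ρ * σ ^ 2 * (b + n) with hddef
  have hd : 0 < d := by positivity
  set A : ℝ := (2 * Real.pi) ^ (-(k : ℝ) / 2) * M.det ^ ((1 : ℝ) / 2) *
      (σ ^ 2 : ℝ) ^ (-(k : ℝ) / 2) * (a * (ρ * (b + n)) ^ a) with hAdef
  set B : ℝ := Real.Gamma (a + (k : ℝ) / 2) / Real.Gamma a *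
      (2 * Real.pi) ^ (-(k : ℝ) / 2) * (c * σ ^ 2 * ρ * (b + n)) ^ (-(k : ℝ) / 2) *
      M.det ^ ((1 : ℝ) / 2) with hBdef
  have hdet : 0 < M.det := hM.det_pos
  have hA : 0 < A := by
    rw [hAdef]
    have h2π : (0:ℝ) < 2 * Real.pi := by positivity
    positivity
  have hB : 0 < B := by
    rw [hBdef]
    have h2π : (0:ℝ) < 2 * Real.pi := by positivity
    positivity
  set I : ℝ → ℝ := fun t => ∫ g in Set.Ioi g0,
      g ^ (-((k:ℝ)/2)) * (g + b) ^ (-(a+1)) * Real.exp (-(C * t) / g) with hIdef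
  -- the key limit
  have key : Tendsto (fun t => (C * t) ^ (a + (k:ℝ)/2) * I t) atTop
      (𝓝 (Real.Gamma (a + (k:ℝ)/2))) :=
    core_limit a ((k:ℝ)/2) b C g0 ha (by positivity) hb hC hg0
  have hrat : Tendsto (fun t : ℝ => (1 + t / d) / (C * t)) atTop (𝓝 ((C * d)⁻¹)) := by
    have h1 : Tendsto (fun t : ℝ => 1 / (C * t)) atTop (𝓝 0) :=
      Tendsto.div_atTop tendsto_const_nhds (Tendsto.const_mul_atTop hC tendsto_id)
    have h2 := h1.add_const ((C * d)⁻¹)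
    rw [zero_add] at h2
    apply h2.congr'
    filter_upwards [eventually_gt_atTop (0:ℝ)] with t ht
    have h3 : C * t ≠ 0 := by positivity
    field_simp
  have hpow : Tendsto (fun t : ℝ => ((1 + t / d) / (C * t)) ^ (a + (k:ℝ)/2)) atTop
      (𝓝 (((C * d)⁻¹) ^ (a + (k:ℝ)/2))) :=
    hrat.rpow_const (Or.inl (by positivity))
  have hprod : Tendsto (fun t : ℝ => A / B * ((C * t) ^ (a + (k:ℝ)/2) * I t) *
      ((1 + t / d) / (C * t)) ^ (a + (k:ℝ)/2)) atTop
      (𝓝 (A / B * Real.Gamma (a + (k:ℝ)/2) * ((C * d)⁻¹) ^ (a + (k:ℝ)/2))) :=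
    (key.const_mul (A / B)).mul hpow
  -- the limit value is 1
  have hCd : C * d = c * R := by
    rw [hCdef, hddef, hRdef]
    field_simp
  have hone : A / B * Real.Gamma (a + (k:ℝ)/2) * ((C * d)⁻¹) ^ (a + (k:ℝ)/2) = 1 := by
    rw [hCd]
    have hcR : 0 < c * R := by positivity
    have e0 : c ^ a = a * Real.Gamma a := by
      rw [hcdef, ← Real.rpow_mul (by positivity : (0:ℝ) ≤ a * Real.Gamma a), one_div,
        inv_mul_cancel₀ (ne_of_gt ha), Real.rpow_one]
    have e1 : ((c * R)⁻¹) ^ (a + (k:ℝ)/2) = c ^ (-(a + (k:ℝ)/2)) * R ^ (-(a + (k:ℝ)/2)) := by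
      rw [Real.inv_rpow hcR.le, ← Real.rpow_neg hcR.le, Real.mul_rpow hc.le hR.le]
    have e2 : (c * σ ^ 2 * ρ * (b + n)) ^ (-((k:ℝ)/2)) =
        c ^ (-((k:ℝ)/2)) * (σ ^ 2 : ℝ) ^ (-((k:ℝ)/2)) * R ^ (-((k:ℝ)/2)) := by
      rw [show c * σ ^ 2 * ρ * (b + n) = c * (σ ^ 2) * R by rw [hRdef]; ring,
        Real.mul_rpow (by positivity) hR.le, Real.mul_rpow hc.le (by positivity)]
    have e3 : c ^ (-(a + (k:ℝ)/2)) = c ^ (-a) * c ^ (-((k:ℝ)/2)) := by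
      rw [← Real.rpow_add hc]; congr 1; ring
    have e4 : R ^ a * R ^ (-(a + (k:ℝ)/2)) = R ^ (-((k:ℝ)/2)) := by
      rw [← Real.rpow_add hR]; congr 1; ring
    have e5 : a * Real.Gamma a * c ^ (-a) = 1 := by
      rw [Real.rpow_neg hc.le, ← e0, mul_inv_cancel₀ (by positivity : (c:ℝ) ^ a ≠ 0)]
    rw [show A / B * Real.Gamma (a + (k:ℝ)/2) * ((c * R)⁻¹) ^ (a + (k:ℝ)/2)
        = A * Real.Gamma (a + (k:ℝ)/2) * ((c * R)⁻¹) ^ (a + (k:ℝ)/2) / B by ring,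
      div_eq_one_iff_eq (ne_of_gt hB)]
    rw [hAdef, hBdef, e1, e3, ← hRdef]
    rw [show (-(k:ℝ)/2 : ℝ) = -((k:ℝ)/2) by ring]
    rw [e2]
    rw [div_mul_eq_mul_div, div_mul_eq_mul_div, div_mul_eq_mul_div, eq_div_iff (ne_of_gt hΓa)]
    calc (2 * Real.pi) ^ (-((k:ℝ) / 2)) * M.det ^ ((1:ℝ) / 2) * (σ ^ 2 : ℝ) ^ (-((k:ℝ) / 2)) *
          (a * R ^ a) * Real.Gamma (a + (k:ℝ) / 2) *
          (c ^ (-a) * c ^ (-((k:ℝ) / 2)) * R ^ (-(a + (k:ℝ) / 2))) * Real.Gamma a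
        = (a * Real.Gamma a * c ^ (-a)) * (R ^ a * R ^ (-(a + (k:ℝ) / 2))) *
          ((2 * Real.pi) ^ (-((k:ℝ) / 2)) * M.det ^ ((1:ℝ) / 2) * (σ ^ 2 : ℝ) ^ (-((k:ℝ) / 2)) *
            Real.Gamma (a + (k:ℝ) / 2) * c ^ (-((k:ℝ) / 2))) := by ring
      _ = 1 * R ^ (-((k:ℝ) / 2)) *
          ((2 * Real.pi) ^ (-((k:ℝ) / 2)) * M.det ^ ((1:ℝ) / 2) * (σ ^ 2 : ℝ) ^ (-((k:ℝ) / 2)) *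
            Real.Gamma (a + (k:ℝ) / 2) * c ^ (-((k:ℝ) / 2))) := by rw [e4, e5]
      _ = Real.Gamma (a + (k:ℝ) / 2) * (2 * Real.pi) ^ (-((k:ℝ) / 2)) *
          (c ^ (-((k:ℝ) / 2)) * (σ ^ 2 : ℝ) ^ (-((k:ℝ) / 2)) * R ^ (-((k:ℝ) / 2))) *
          M.det ^ ((1:ℝ) / 2) := by ring
  -- scalar convergence
  have hf : Tendsto (fun t : ℝ => A * I t / (B * (1 + t / d) ^ (-(a + (k:ℝ)/2)))) atTop
      (𝓝 1) := by
    have hprod1 := hprod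
    rw [hone] at hprod1
    apply Tendsto.congr' _ hprod1
    filter_upwards [eventually_gt_atTop (0:ℝ)] with t ht
    have hCt : 0 < C * t := by positivity
    have h1t : 0 < 1 + t / d := by positivity
    rw [div_rpow h1t.le hCt.le, Real.rpow_neg h1t.le]
    have hp1 : (1 + t / d) ^ (a + (k:ℝ)/2) ≠ 0 := by positivity
    have hp2 : (C * t) ^ (a + (k:ℝ)/2) ≠ 0 := by positivity
    field_simp
  -- transfer along the comap filter
  have hcomp : Tendsto ((fun t : ℝ => A * I t / (B * (1 + t / d) ^ (-(a + (k:ℝ)/2)))) ∘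
      (fun β : Fin k → ℝ => β ⬝ᵥ M *ᵥ β))
      (Filter.comap (fun β : Fin k → ℝ => β ⬝ᵥ M *ᵥ β) atTop) (𝓝 1) :=
    hf.comp tendsto_comap
  apply hcomp.congr
  intro β
  simp only [Function.comp_apply]
  congr 1
  exact (numerator_eq M hM σ a b n ρ hσ ha hg0 β).symm
end

section
/- Let k ≥ 1 be an integer, let a > 0, ρ > 0, σ > 0 and c ≥ 0 be fixed, and fix β ∈ ℝ^k. Let (A_n) be a sequence of symmetric positive definite k×k real matrices with (1/n)A_n → Ξ for some symmetric positive definite matrix Ξ, and let (b_n) be a sequence of positive reals with b_n/n → c; assume ρ ≥ b_n/(b_n+n) for all n and ρ(c+1) > c. Then, as n → ∞, ∫_0^∞ N_k(β | 0, g σ² A_n⁻¹) · a[ρ(b_n+n)]^a (g+b_n)^{−(a+1)} 1{g > ρ(b_n+n) − b_n} dg converges to ∫_0^∞ N_k(β | 0, g* σ² Ξ⁻¹) · a[ρ(c+1)]^a (g*+c)^{−(a+1)} 1{g* > ρ(c+1) − c} dg*. -/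
open MeasureTheory Filter Topology Real Matrix

lemma normalDensity_smul_inv {k : ℕ} (M : Matrix (Fin k) (Fin k) ℝ) (hM : M.PosDef)
    {r : ℝ} (hr : 0 < r) (β : Fin k → ℝ) :
    normalDensity (r • M⁻¹) β =
      (2 * Real.pi) ^ (-(k : ℝ) / 2) * (r ^ k * (M.det)⁻¹) ^ (-(1 : ℝ) / 2) *
        Real.exp (-(r⁻¹ * (β ⬝ᵥ M *ᵥ β)) / 2) := by
  have hMdet : IsUnit M.det := hM.det_pos.ne'.isUnit
  have hdet : (r • M⁻¹).det = r ^ k * (M.det)⁻¹ := by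
    rw [Matrix.det_smul, Matrix.det_nonsing_inv, Ring.inverse_eq_inv', Fintype.card_fin]
  have hinv : (r • M⁻¹)⁻¹ = r⁻¹ • M := by
    apply Matrix.inv_eq_left_inv
    rw [Matrix.smul_mul, Matrix.mul_smul, smul_smul, inv_mul_cancel₀ hr.ne', one_smul,
      Matrix.mul_nonsing_inv _ hMdet]
  unfold normalDensity
  rw [hdet, hinv]
  congr 2
  simp [Matrix.smul_mulVec, dotProduct_smul, smul_eq_mul]

set_option maxHeartbeats 2000000 in
/-- Result 6 of the paper (intrinsic prior consistency): if
`(1/n) Aₙ → Ξ` and `bₙ/n → c`, the conditional robust prior converges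
pointwise to the intrinsic prior, a scale mixture of normals with mixing
density `a [ρ(c+1)]^a (g*+c)^{-(a+1)}` on `g* > ρ(c+1) - c`. -/
theorem robustPrior_tendsto_intrinsicPrior
    (k : ℕ) (hk : 1 ≤ k) (a ρ σ c : ℝ)
    (ha : 0 < a) (hρ : 0 < ρ) (hσ : 0 < σ) (hc : 0 ≤ c)
    (β : Fin k → ℝ)
    (A : ℕ → Matrix (Fin k) (Fin k) ℝ) (hA : ∀ n, (A n).PosDef)
    (Ξ : Matrix (Fin k) (Fin k) ℝ) (hΞ : Ξ.PosDef)
    (hAlim : Tendsto (fun n : ℕ => ((n : ℝ)⁻¹) • A n) atTop (𝓝 Ξ))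
    (b : ℕ → ℝ) (hb : ∀ n, 0 < b n)
    (hblim : Tendsto (fun n : ℕ => b n / (n : ℝ)) atTop (𝓝 c))
    (hρn : ∀ n : ℕ, b n / (b n + n) ≤ ρ) (hρc : c < ρ * (c + 1)) :
    Tendsto
      (fun n : ℕ =>
        ∫ g in Set.Ioi (0:ℝ),
          normalDensity ((g * σ ^ 2) • (A n)⁻¹) β *
            (if ρ * (b n + n) - b n < g then
                a * (ρ * (b n + n)) ^ a * (g + b n) ^ (-(a + 1))
              else 0))
      atTop
      (𝓝 (∫ g in Set.Ioi (0:ℝ),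
        normalDensity ((g * σ ^ 2) • Ξ⁻¹) β *
          (if ρ * (c + 1) - c < g then
              a * (ρ * (c + 1)) ^ a * (g + c) ^ (-(a + 1))
            else 0))) := by
  have hτ : 0 < ρ * (c + 1) - c := by linarith
  have hρc0 : 0 < ρ * (c + 1) := lt_of_le_of_lt hc hρc
  have hdetΞ : 0 < Ξ.det := hΞ.det_pos
  set τ : ℝ := ρ * (c + 1) - c with hτdef
  set Cn : ℕ → ℝ := fun n => b n / n with hCndef
  set M : ℕ → Matrix (Fin k) (Fin k) ℝ := fun n => ((n : ℝ)⁻¹) • A n with hMdef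
  set E : ℕ → ℝ → ℝ := fun n t =>
    (2 * Real.pi) ^ (-(k : ℝ) / 2) * ((t * σ ^ 2) ^ k * ((M n).det)⁻¹) ^ (-(1 : ℝ) / 2) *
      Real.exp (-((t * σ ^ 2)⁻¹ * (β ⬝ᵥ (M n) *ᵥ β)) / 2) *
      (if ρ * (Cn n + 1) - Cn n < t then
          a * (ρ * (Cn n + 1)) ^ a * (t + Cn n) ^ (-(a + 1)) else 0) with hEdef
  set E0 : ℝ → ℝ := fun t =>
    (2 * Real.pi) ^ (-(k : ℝ) / 2) * ((t * σ ^ 2) ^ k * (Ξ.det)⁻¹) ^ (-(1 : ℝ) / 2) *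
      Real.exp (-((t * σ ^ 2)⁻¹ * (β ⬝ᵥ Ξ *ᵥ β)) / 2) *
      (if τ < t then a * (ρ * (c + 1)) ^ a * (t + c) ^ (-(a + 1)) else 0) with hE0def
  -- basic facts
  have hCn0 : ∀ n, 0 ≤ Cn n := fun n => div_nonneg (hb n).le (Nat.cast_nonneg n)
  have hClim : Tendsto Cn atTop (𝓝 c) := hblim
  have hρlim : Tendsto (fun n => ρ * (Cn n + 1)) atTop (𝓝 (ρ * (c + 1))) :=
    tendsto_const_nhds.mul (hClim.add tendsto_const_nhds)
  have hτlim : Tendsto (fun n => ρ * (Cn n + 1) - Cn n) atTop (𝓝 τ) := hρlim.sub hClim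
  have hdetM : ∀ n : ℕ, (M n).det = ((n : ℝ)⁻¹) ^ k * (A n).det := fun n => by
    simp [hMdef, Matrix.det_smul]
  have hqM : ∀ n : ℕ, β ⬝ᵥ (M n) *ᵥ β = ((n : ℝ)⁻¹) * (β ⬝ᵥ (A n) *ᵥ β) := fun n => by
    simp [hMdef, Matrix.smul_mulVec, dotProduct_smul, smul_eq_mul]
  have hqA : ∀ n : ℕ, 0 ≤ β ⬝ᵥ (A n) *ᵥ β := fun n => by
    have := (hA n).posSemidef.re_dotProduct_nonneg β
    simpa using this
  have hqM0 : ∀ n : ℕ, 0 ≤ β ⬝ᵥ (M n) *ᵥ β := fun n => by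
    rw [hqM n]; exact mul_nonneg (by positivity) (hqA n)
  have hdetlim : Tendsto (fun n => (M n).det) atTop (𝓝 Ξ.det) :=
    ((continuous_id.matrix_det).tendsto Ξ).comp hAlim
  have hqlim : Tendsto (fun n => β ⬝ᵥ (M n) *ᵥ β) atTop (𝓝 (β ⬝ᵥ Ξ *ᵥ β)) :=
    ((continuous_const.dotProduct
      (continuous_id.matrix_mulVec continuous_const)).tendsto Ξ).comp hAlim
  -- Step A : target is ∫ E0
  have htarget :
      (∫ g in Set.Ioi (0:ℝ),
        normalDensity ((g * σ ^ 2) • Ξ⁻¹) β *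
          (if τ < g then a * (ρ * (c + 1)) ^ a * (g + c) ^ (-(a + 1)) else 0))
        = ∫ t in Set.Ioi (0:ℝ), E0 t := by
    apply setIntegral_congr_fun measurableSet_Ioi
    intro g hg
    have hg0 : (0:ℝ) < g := hg
    have hr : 0 < g * σ ^ 2 := by positivity
    dsimp only
    rw [normalDensity_smul_inv Ξ hΞ hr β]
  -- Step B : change of variables g = n t
  have hstep : ∀ᶠ n in atTop,
      (∫ g in Set.Ioi (0:ℝ),
        normalDensity ((g * σ ^ 2) • (A n)⁻¹) β *
          (if ρ * (b n + n) - b n < g then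
              a * (ρ * (b n + n)) ^ a * (g + b n) ^ (-(a + 1)) else 0))
        = ∫ t in Set.Ioi (0:ℝ), E n t := by
    filter_upwards [eventually_ge_atTop 1] with n hn
    have hn0 : (0:ℝ) < n := by exact_mod_cast hn
    have hbn : b n = n * Cn n := by
      simp only [hCndef]; field_simp
    have hchg := integral_comp_mul_left_Ioi
      (fun g => normalDensity ((g * σ ^ 2) • (A n)⁻¹) β *
        (if ρ * (b n + n) - b n < g then
            a * (ρ * (b n + n)) ^ a * (g + b n) ^ (-(a + 1)) else 0)) 0 hn0
    rw [mul_zero] at hchg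
    have h2 : (∫ g in Set.Ioi (0:ℝ),
          normalDensity ((g * σ ^ 2) • (A n)⁻¹) β *
            (if ρ * (b n + n) - b n < g then
                a * (ρ * (b n + n)) ^ a * (g + b n) ^ (-(a + 1)) else 0))
        = (n:ℝ) • ∫ t in Set.Ioi (0:ℝ),
            normalDensity (((n:ℝ) * t * σ ^ 2) • (A n)⁻¹) β *
              (if ρ * (b n + n) - b n < (n:ℝ) * t then
                  a * (ρ * (b n + n)) ^ a * ((n:ℝ) * t + b n) ^ (-(a + 1)) else 0) := by
      rw [hchg, smul_smul, mul_inv_cancel₀ hn0.ne', one_smul]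
    rw [h2, ← integral_smul]
    apply setIntegral_congr_fun measurableSet_Ioi
    intro t ht
    have ht0 : (0:ℝ) < t := ht
    have hr : 0 < (n:ℝ) * t * σ ^ 2 := by positivity
    simp only [smul_eq_mul]
    rw [normalDensity_smul_inv (A n) (hA n) hr β]
    simp only [hEdef]
    rw [hdetM n, hqM n]
    have e1 : (t * σ ^ 2) ^ k * ((((n:ℝ)⁻¹) ^ k * (A n).det)⁻¹)
        = ((n:ℝ) * t * σ ^ 2) ^ k * ((A n).det)⁻¹ := by
      rw [mul_inv, ← inv_pow, inv_inv, mul_pow, mul_pow]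
      ring
    have e2 : (t * σ ^ 2)⁻¹ * ((n:ℝ)⁻¹ * (β ⬝ᵥ (A n) *ᵥ β))
        = ((n:ℝ) * t * σ ^ 2)⁻¹ * (β ⬝ᵥ (A n) *ᵥ β) := by
      rw [show (n:ℝ) * t * σ ^ 2 = (n:ℝ) * (t * σ ^ 2) by ring, mul_inv]
      ring
    rw [e1, e2]
    have hcond : (ρ * (b n + n) - b n < (n:ℝ) * t) ↔ (ρ * (Cn n + 1) - Cn n < t) := by
      have h3 : ρ * (b n + n) - b n = (n:ℝ) * (ρ * (Cn n + 1) - Cn n) := by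
        rw [hbn]; ring
      rw [h3]
      exact mul_lt_mul_iff_right₀ hn0
    by_cases hP : ρ * (b n + n) - b n < (n:ℝ) * t
    · rw [if_pos hP, if_pos (hcond.mp hP)]
      have h1 : ρ * (b n + n) = (n:ℝ) * (ρ * (Cn n + 1)) := by rw [hbn]; ring
      have h2' : (n:ℝ) * t + b n = (n:ℝ) * (t + Cn n) := by rw [hbn]; ring
      rw [h1, h2', Real.mul_rpow hn0.le (mul_nonneg hρ.le (by linarith [hCn0 n])),
        Real.mul_rpow hn0.le (by linarith [hCn0 n, ht0])]
      have h3 : (n:ℝ) ^ a * ((n:ℝ) ^ (-(a + 1))) = (n:ℝ)⁻¹ := by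
        rw [← Real.rpow_add hn0, show a + -(a + 1) = -1 by ring, Real.rpow_neg_one]
      have key : ∀ D X Y : ℝ,
          (n:ℝ) * (D * (a * ((n:ℝ) ^ a * X) * ((n:ℝ) ^ (-(a + 1)) * Y)))
            = D * (a * X * Y) := by
        intro D X Y
        calc (n:ℝ) * (D * (a * ((n:ℝ) ^ a * X) * ((n:ℝ) ^ (-(a + 1)) * Y)))
            = ((n:ℝ) ^ a * ((n:ℝ) ^ (-(a + 1)))) * (n:ℝ) * (D * (a * X * Y)) := by ring
          _ = D * (a * X * Y) := by
              rw [h3, inv_mul_cancel₀ hn0.ne', one_mul]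
      exact key _ _ _
    · rw [if_neg hP, if_neg ((not_congr hcond).mp hP)]
      ring
  -- Step C : dominated convergence
  have hτ2 : 0 < τ / 2 := by positivity
  set K : ℝ := (2 * Real.pi) ^ (-(k : ℝ) / 2) * ((τ / 2 * σ ^ 2) ^ k) ^ (-(1 : ℝ) / 2) *
      (Ξ.det + 1) ^ ((1 : ℝ) / 2) * (a * ((ρ * (c + 1)) ^ a + 1)) with hKdef
  have hK : 0 ≤ K := by
    have h1 : (0:ℝ) ≤ (ρ * (c + 1)) ^ a + 1 := by positivity
    positivity
  set bound : ℝ → ℝ := fun t => if τ / 2 < t then K * t ^ (-(a + 1)) else 0 with hbounddef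
  have hbound_int : Integrable bound (volume.restrict (Set.Ioi (0:ℝ))) := by
    have h := (integrableOn_Ioi_rpow_of_lt (show -(a + 1) < -1 by linarith) hτ2).const_mul K
    have hbeq : bound = Set.indicator (Set.Ioi (τ / 2)) (fun t => K * t ^ (-(a + 1))) := by
      funext t
      simp [hbounddef, Set.indicator_apply, Set.mem_Ioi]
    rw [hbeq]
    exact ((integrable_indicator_iff measurableSet_Ioi).mpr h).restrict
  have hmeas : ∀ n : ℕ, AEStronglyMeasurable (E n) (volume.restrict (Set.Ioi (0:ℝ))) := by
    intro n
    refine (Measurable.mul ?_ ?_).aestronglyMeasurable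
    · fun_prop
    · refine Measurable.ite ?_ (by fun_prop) measurable_const
      exact measurableSet_Ioi
  have h1 : ∀ᶠ n in atTop, τ / 2 < ρ * (Cn n + 1) - Cn n :=
    hτlim.eventually (eventually_gt_nhds (by linarith))
  have h2 : ∀ᶠ n in atTop, (ρ * (Cn n + 1)) ^ a ≤ (ρ * (c + 1)) ^ a + 1 := by
    have hcont : Tendsto (fun n => (ρ * (Cn n + 1)) ^ a) atTop (𝓝 ((ρ * (c + 1)) ^ a)) :=
      ((Real.continuousAt_rpow_const _ a (Or.inl hρc0.ne')).tendsto).comp hρlim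
    exact hcont.eventually (eventually_le_nhds (lt_add_one _))
  have h3 : ∀ᶠ n in atTop, (M n).det ≤ Ξ.det + 1 :=
    hdetlim.eventually (eventually_le_nhds (lt_add_one _))
  have hdetMpos : ∀ n : ℕ, 1 ≤ n → 0 < (M n).det := by
    intro n hn
    have hn0 : (0:ℝ) < n := by exact_mod_cast hn
    rw [hdetM n]
    have := (hA n).det_pos
    positivity
  have h_bound : ∀ᶠ n in atTop,
      ∀ᵐ t ∂(volume.restrict (Set.Ioi (0:ℝ))), ‖E n t‖ ≤ bound t := by
    filter_upwards [h1, h2, h3, eventually_ge_atTop 1] with n hn1 hn2 hn3 hn4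
    filter_upwards [ae_restrict_mem measurableSet_Ioi] with t ht
    have ht0 : (0:ℝ) < t := ht
    have hdpos : 0 < (M n).det := hdetMpos n hn4
    by_cases hcond : ρ * (Cn n + 1) - Cn n < t
    · have htτ : τ / 2 < t := lt_trans hn1 hcond
      have hEnn : 0 ≤ E n t := by
        simp only [hEdef, if_pos hcond]
        have b1 : (0:ℝ) ≤ (2 * Real.pi) ^ (-(k : ℝ) / 2) := Real.rpow_nonneg (by positivity) _
        have b2 : (0:ℝ) ≤ ((t * σ ^ 2) ^ k * ((M n).det)⁻¹) ^ (-(1 : ℝ) / 2) :=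
          Real.rpow_nonneg (by positivity) _
        have b4 : (0:ℝ) ≤ a * (ρ * (Cn n + 1)) ^ a * (t + Cn n) ^ (-(a + 1)) := by
          have hx : (0:ℝ) ≤ (ρ * (Cn n + 1)) ^ a := Real.rpow_nonneg (by nlinarith [hCn0 n]) _
          have hy : (0:ℝ) ≤ (t + Cn n) ^ (-(a + 1)) := Real.rpow_nonneg (by linarith [hCn0 n]) _
          exact mul_nonneg (mul_nonneg ha.le hx) hy
        exact mul_nonneg (mul_nonneg (mul_nonneg b1 b2) (Real.exp_pos _).le) b4
      rw [Real.norm_eq_abs, abs_of_nonneg hEnn]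
      simp only [hEdef, if_pos hcond, hbounddef, if_pos htτ, hKdef]
      have hP2 : ((t * σ ^ 2) ^ k * ((M n).det)⁻¹) ^ (-(1 : ℝ) / 2)
          ≤ ((τ / 2 * σ ^ 2) ^ k) ^ (-(1 : ℝ) / 2) * (Ξ.det + 1) ^ ((1 : ℝ) / 2) := by
        rw [Real.mul_rpow (by positivity) (inv_nonneg.mpr hdpos.le),
          Real.inv_rpow hdpos.le, show (-(1:ℝ) / 2) = -(1/2) by norm_num,
          Real.rpow_neg hdpos.le, inv_inv]
        have hb1 : ((t * σ ^ 2) ^ k) ^ (-((1:ℝ) / 2)) ≤ ((τ / 2 * σ ^ 2) ^ k) ^ (-((1:ℝ) / 2)) := by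
          apply Real.rpow_le_rpow_of_nonpos (by positivity)
          · exact pow_le_pow_left₀ (by positivity) (by nlinarith [sq_nonneg σ, hσ]) k
          · norm_num
        have hb2 : ((M n).det) ^ ((1:ℝ) / 2) ≤ (Ξ.det + 1) ^ ((1:ℝ) / 2) :=
          Real.rpow_le_rpow hdpos.le hn3 (by norm_num)
        exact mul_le_mul hb1 hb2 (Real.rpow_nonneg hdpos.le _) (Real.rpow_nonneg (by positivity) _)
      have hP3 : Real.exp (-((t * σ ^ 2)⁻¹ * (β ⬝ᵥ (M n) *ᵥ β)) / 2) ≤ 1 := by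
        rw [Real.exp_le_one_iff]
        have := hqM0 n
        have h5 : 0 ≤ (t * σ ^ 2)⁻¹ * (β ⬝ᵥ (M n) *ᵥ β) :=
          mul_nonneg (by positivity) (hqM0 n)
        linarith
      have hP4 : a * (ρ * (Cn n + 1)) ^ a * (t + Cn n) ^ (-(a + 1))
          ≤ a * ((ρ * (c + 1)) ^ a + 1) * t ^ (-(a + 1)) := by
        have hb4 : (t + Cn n) ^ (-(a + 1)) ≤ t ^ (-(a + 1)) :=
          Real.rpow_le_rpow_of_nonpos ht0 (le_add_of_nonneg_right (hCn0 n)) (by linarith)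
        have hnn : (0:ℝ) ≤ (ρ * (Cn n + 1)) ^ a := Real.rpow_nonneg (by nlinarith [hCn0 n]) _
        apply mul_le_mul (mul_le_mul_of_nonneg_left hn2 ha.le) hb4
          (Real.rpow_nonneg (by linarith [hCn0 n]) _) (by positivity)
      calc (2 * Real.pi) ^ (-(k : ℝ) / 2) * ((t * σ ^ 2) ^ k * ((M n).det)⁻¹) ^ (-(1 : ℝ) / 2) *
            Real.exp (-((t * σ ^ 2)⁻¹ * (β ⬝ᵥ (M n) *ᵥ β)) / 2) *
            (a * (ρ * (Cn n + 1)) ^ a * (t + Cn n) ^ (-(a + 1)))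
          ≤ (2 * Real.pi) ^ (-(k : ℝ) / 2) *
            (((τ / 2 * σ ^ 2) ^ k) ^ (-(1 : ℝ) / 2) * (Ξ.det + 1) ^ ((1 : ℝ) / 2)) * 1 *
            (a * ((ρ * (c + 1)) ^ a + 1) * t ^ (-(a + 1))) := by
            have b1 : (0:ℝ) ≤ (2 * Real.pi) ^ (-(k : ℝ) / 2) := Real.rpow_nonneg (by positivity) _
            have b2 : (0:ℝ) ≤ ((t * σ ^ 2) ^ k * ((M n).det)⁻¹) ^ (-(1 : ℝ) / 2) :=
              Real.rpow_nonneg (by positivity) _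
            have b4 : (0:ℝ) ≤ a * (ρ * (Cn n + 1)) ^ a * (t + Cn n) ^ (-(a + 1)) := by
              have hx : (0:ℝ) ≤ (ρ * (Cn n + 1)) ^ a := Real.rpow_nonneg (by nlinarith [hCn0 n]) _
              have hy : (0:ℝ) ≤ (t + Cn n) ^ (-(a + 1)) := Real.rpow_nonneg (by linarith [hCn0 n]) _
              exact mul_nonneg (mul_nonneg ha.le hx) hy
            have hB2 : (0:ℝ) ≤ ((τ / 2 * σ ^ 2) ^ k) ^ (-(1 : ℝ) / 2) * (Ξ.det + 1) ^ ((1 : ℝ) / 2) :=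
              mul_nonneg (Real.rpow_nonneg (by positivity) _) (Real.rpow_nonneg (by positivity) _)
            apply mul_le_mul _ hP4 b4 (mul_nonneg (mul_nonneg b1 hB2) zero_le_one)
            apply mul_le_mul (mul_le_mul_of_nonneg_left hP2 b1) hP3 (Real.exp_pos _).le
            exact mul_nonneg b1 hB2
        _ = (2 * Real.pi) ^ (-(k : ℝ) / 2) * ((τ / 2 * σ ^ 2) ^ k) ^ (-(1 : ℝ) / 2) *
            (Ξ.det + 1) ^ ((1 : ℝ) / 2) * (a * ((ρ * (c + 1)) ^ a + 1)) * t ^ (-(a + 1)) := by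
            ring
    · have hEz : E n t = 0 := by
        simp only [hEdef, if_neg hcond, mul_zero]
      rw [hEz, norm_zero, hbounddef]
      dsimp only
      split_ifs with h
      · have : (0:ℝ) ≤ t ^ (-(a + 1)) := Real.rpow_nonneg ht0.le _
        positivity
      · exact le_refl 0
  have h_lim : ∀ᵐ t ∂(volume.restrict (Set.Ioi (0:ℝ))),
      Tendsto (fun n => E n t) atTop (𝓝 (E0 t)) := by
    have hne : ∀ᵐ t : ℝ, t ≠ τ := by
      rw [MeasureTheory.ae_iff]
      simp only [not_not]
      simpa [Set.setOf_eq_eq_singleton] using measure_singleton τ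
    filter_upwards [ae_restrict_mem measurableSet_Ioi, ae_restrict_of_ae hne] with t ht htne
    have ht0 : (0:ℝ) < t := ht
    have L2 : Tendsto (fun n => ((t * σ ^ 2) ^ k * ((M n).det)⁻¹) ^ (-(1 : ℝ) / 2)) atTop
        (𝓝 (((t * σ ^ 2) ^ k * (Ξ.det)⁻¹) ^ (-(1 : ℝ) / 2))) := by
      have hbase : Tendsto (fun n => (t * σ ^ 2) ^ k * ((M n).det)⁻¹) atTop
          (𝓝 ((t * σ ^ 2) ^ k * (Ξ.det)⁻¹)) :=
        tendsto_const_nhds.mul (hdetlim.inv₀ hdetΞ.ne')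
      have hne0 : (t * σ ^ 2) ^ k * (Ξ.det)⁻¹ ≠ 0 := by positivity
      exact ((Real.continuousAt_rpow_const _ _ (Or.inl hne0)).tendsto).comp hbase
    have L3 : Tendsto (fun n => Real.exp (-((t * σ ^ 2)⁻¹ * (β ⬝ᵥ (M n) *ᵥ β)) / 2)) atTop
        (𝓝 (Real.exp (-((t * σ ^ 2)⁻¹ * (β ⬝ᵥ Ξ *ᵥ β)) / 2))) := by
      have : Tendsto (fun n => -((t * σ ^ 2)⁻¹ * (β ⬝ᵥ (M n) *ᵥ β)) / 2) atTop
          (𝓝 (-((t * σ ^ 2)⁻¹ * (β ⬝ᵥ Ξ *ᵥ β)) / 2)) :=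
        ((tendsto_const_nhds.mul hqlim).neg).div_const 2
      exact (Real.continuous_exp.tendsto _).comp this
    have L4 : Tendsto (fun n => if ρ * (Cn n + 1) - Cn n < t then
          a * (ρ * (Cn n + 1)) ^ a * (t + Cn n) ^ (-(a + 1)) else 0) atTop
        (𝓝 (if τ < t then a * (ρ * (c + 1)) ^ a * (t + c) ^ (-(a + 1)) else 0)) := by
      by_cases hgt : τ < t
      · rw [if_pos hgt]
        have hev : ∀ᶠ n in atTop, ρ * (Cn n + 1) - Cn n < t :=
          hτlim.eventually (eventually_lt_nhds hgt)
        have hmain : Tendsto (fun n => a * (ρ * (Cn n + 1)) ^ a * (t + Cn n) ^ (-(a + 1))) atTop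
            (𝓝 (a * (ρ * (c + 1)) ^ a * (t + c) ^ (-(a + 1)))) := by
          have t1 : Tendsto (fun n => (ρ * (Cn n + 1)) ^ a) atTop (𝓝 ((ρ * (c + 1)) ^ a)) :=
            ((Real.continuousAt_rpow_const _ a (Or.inl hρc0.ne')).tendsto).comp hρlim
          have t2 : Tendsto (fun n => (t + Cn n) ^ (-(a + 1))) atTop (𝓝 ((t + c) ^ (-(a + 1)))) := by
            have hb : Tendsto (fun n => t + Cn n) atTop (𝓝 (t + c)) :=
              tendsto_const_nhds.add hClim
            have hne0 : t + c ≠ 0 := by positivity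
            exact ((Real.continuousAt_rpow_const _ _ (Or.inl hne0)).tendsto).comp hb
          exact (tendsto_const_nhds.mul t1).mul t2
        refine hmain.congr' ?_
        filter_upwards [hev] with n hn
        rw [if_pos hn]
      · rw [if_neg hgt]
        have hlt : t < τ := lt_of_le_of_ne (not_lt.mp hgt) htne
        have hev : ∀ᶠ n in atTop, t < ρ * (Cn n + 1) - Cn n :=
          hτlim.eventually (eventually_gt_nhds hlt)
        refine tendsto_const_nhds.congr' ?_
        filter_upwards [hev] with n hn
        rw [if_neg (not_lt.mpr hn.le)]
    have hc1 : Tendsto (fun _ : ℕ => (2 * Real.pi) ^ (-(k : ℝ) / 2)) atTop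
        (𝓝 ((2 * Real.pi) ^ (-(k : ℝ) / 2))) := tendsto_const_nhds
    have := ((hc1.mul L2).mul L3).mul L4
    simpa only [hEdef, hE0def] using this
  have hDCT := MeasureTheory.tendsto_integral_filter_of_dominated_convergence bound
    (Eventually.of_forall hmeas) h_bound hbound_int h_lim
  rw [htarget]
  refine hDCT.congr' ?_
  filter_upwards [hstep] with n hn
  exact hn.symm
end

section
/- Let k_0 ≥ 1 and k ≥ 1 be integers and set n = k_0 + k. Let X_0 be an n×k_0 real matrix and X_i an n×k real matrix such that the n×n matrix [X_0 X_i] is invertible. Let P_0 = X_0(X_0ᵀX_0)⁻¹X_0ᵀ and V = (I_n − P_0)X_i. Then VᵀV is invertible and for every y ∈ ℝⁿ: yᵀ V (VᵀV)⁻¹ Vᵀ y = yᵀ(I_n − P_0)y. -/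
/-!
Write `Q = 1 - P₀` and `W = V(VᵀV)⁻¹Vᵀ`. The two matrices agree on the columns of `[X₀ Xᵢ]`:
both kill `X₀`, because `VᵀX₀ = XᵢᵀQX₀ = 0`, and both send `Xᵢ` to `V`, because `Q` is a
symmetric idempotent, so that `VᵀXᵢ = VᵀV`. A square matrix of full rank has spanning columns,
hence `W = Q` and the two quadratic forms coincide.
-/

open Matrix

namespace Matrix

section Rank

variable {m n R : Type*} [Fintype n] [Field R]

theorem mulVec_surjective_of_rank_eq_card [Fintype m] {A : Matrix m n R}
    (h : A.rank = Fintype.card m) :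
    Function.Surjective A.mulVec := by
  rw [← coe_mulVecLin, ← LinearMap.range_eq_top]
  apply Submodule.eq_top_of_finrank_eq
  rwa [Module.finrank_fintype_fun_eq_card]

theorem mulVec_injective_of_rank_eq_card {A : Matrix m n R} (h : A.rank = Fintype.card n) :
    Function.Injective A.mulVec := by
  have hsum := A.mulVecLin.finrank_range_add_finrank_ker
  rw [Module.finrank_fintype_fun_eq_card, ← rank, h, Nat.add_eq_left,
    Submodule.finrank_eq_zero] at hsum
  rwa [← coe_mulVecLin, ← LinearMap.ker_eq_bot]

end Rank

section FromCols

variable {m n₀ n₁ R : Type*} [Fintype n₀] [Fintype n₁] [CommRing R]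
  {A : Matrix m n₀ R} {B : Matrix m n₁ R}

theorem mulVec_injective_left_of_fromCols (h : Function.Injective (fromCols A B).mulVec) :
    Function.Injective A.mulVec := by
  intro v w hvw
  have : fromCols A B *ᵥ Sum.elim v 0 = fromCols A B *ᵥ Sum.elim w 0 := by
    simp only [fromCols_mulVec_sumElim, hvw]
  simpa using congrArg (· ∘ Sum.inl) (h this)

theorem mulVec_injective_sub_mul_of_fromCols (C : Matrix n₀ n₁ R)
    (h : Function.Injective (fromCols A B).mulVec) : Function.Injective (B - A * C).mulVec := by
  intro v w hvw
  have : fromCols A B *ᵥ Sum.elim (-(C *ᵥ v)) v = fromCols A B *ᵥ Sum.elim (-(C *ᵥ w)) w := by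
    rw [sub_mulVec, sub_mulVec, ← mulVec_mulVec, ← mulVec_mulVec] at hvw
    simpa only [fromCols_mulVec_sumElim, mulVec_neg, neg_add_eq_sub] using hvw
  simpa using congrArg (· ∘ Sum.inr) (h this)

end FromCols

theorem isUnit_transpose_mul_self_of_mulVec_injective {m n R : Type*} [Fintype m] [Fintype n]
    [DecidableEq n] [Field R] [LinearOrder R] [IsStrictOrderedRing R] {A : Matrix m n R}
    (h : Function.Injective A.mulVec) : IsUnit (Aᵀ * A) := by
  rw [← mulVec_injective_iff_isUnit, ← coe_mulVecLin, ← LinearMap.ker_eq_bot,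
    ker_mulVecLin_transpose_mul_self, LinearMap.ker_eq_bot, coe_mulVecLin]
  exact h

theorem eq_of_mul_eq_mul_of_mulVec_surjective {l m n R : Type*} [Fintype m] [Fintype n]
    [CommRing R] {A B : Matrix l m R} {M : Matrix m n R} (hM : Function.Surjective M.mulVec)
    (h : A * M = B * M) : A = B := by
  refine mulVec_injective (funext fun w => ?_)
  obtain ⟨v, rfl⟩ := hM w
  rw [mulVec_mulVec, h, ← mulVec_mulVec]

section HatMatrix

variable {m n R : Type*} [Fintype m] [Fintype n] [DecidableEq n] [CommRing R]

-- When `XᵀX` is singular, `⁻¹` returns `0` and so does `hatMatrix X`.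
noncomputable def hatMatrix (X : Matrix m n R) : Matrix m m R := X * (Xᵀ * X)⁻¹ * Xᵀ

variable {X : Matrix m n R}

theorem transpose_hatMatrix : (hatMatrix X)ᵀ = hatMatrix X := by
  simp [hatMatrix, transpose_nonsing_inv, Matrix.mul_assoc]

theorem hatMatrix_mul_of_transpose_mul_eq_zero {p : Type*} {Y : Matrix m p R}
    (h : Xᵀ * Y = 0) : hatMatrix X * Y = 0 := by
  rw [hatMatrix, Matrix.mul_assoc, h, Matrix.mul_zero]

theorem hatMatrix_mul_of_transpose_mul_eq {Y : Matrix m n R} (hX : IsUnit (Xᵀ * X))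
    (h : Xᵀ * Y = Xᵀ * X) : hatMatrix X * Y = X := by
  rw [hatMatrix, Matrix.mul_assoc, h, Matrix.mul_assoc,
    nonsing_inv_mul _ ((isUnit_iff_isUnit_det _).mp hX), Matrix.mul_one]

theorem hatMatrix_mul_self (hX : IsUnit (Xᵀ * X)) : hatMatrix X * X = X :=
  hatMatrix_mul_of_transpose_mul_eq hX rfl

theorem hatMatrix_mul_hatMatrix (hX : IsUnit (Xᵀ * X)) :
    hatMatrix X * hatMatrix X = hatMatrix X := by
  nth_rw 2 [hatMatrix]
  rw [← Matrix.mul_assoc, ← Matrix.mul_assoc, hatMatrix_mul_self hX, hatMatrix]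

variable [DecidableEq m]

theorem one_sub_hatMatrix_mul_self (hX : IsUnit (Xᵀ * X)) : (1 - hatMatrix X) * X = 0 := by
  rw [Matrix.sub_mul, hatMatrix_mul_self hX, Matrix.one_mul, sub_self]

theorem one_sub_hatMatrix_mul_one_sub_hatMatrix (hX : IsUnit (Xᵀ * X)) :
    (1 - hatMatrix X) * (1 - hatMatrix X) = 1 - hatMatrix X := by
  rw [Matrix.sub_mul, Matrix.mul_sub, Matrix.mul_sub, hatMatrix_mul_hatMatrix hX]
  simp

theorem one_sub_hatMatrix_mul {p : Type*} (Y : Matrix m p R) :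
    (1 - hatMatrix X) * Y = Y - X * ((Xᵀ * X)⁻¹ * Xᵀ * Y) := by
  rw [Matrix.sub_mul, Matrix.one_mul, hatMatrix]
  simp only [Matrix.mul_assoc]

theorem transpose_one_sub_hatMatrix : (1 - hatMatrix X)ᵀ = 1 - hatMatrix X := by
  rw [transpose_sub, transpose_one, transpose_hatMatrix]

end HatMatrix

section Residual

variable {m n₀ n₁ R : Type*} [Fintype m] [Fintype n₀] [Fintype n₁] [DecidableEq m]
  [DecidableEq n₀] [DecidableEq n₁] {X₀ : Matrix m n₀ R} {X₁ : Matrix m n₁ R}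

theorem isUnit_transpose_mul_self_one_sub_hatMatrix_mul
    [Field R] [LinearOrder R] [IsStrictOrderedRing R]
    (h : Function.Injective (fromCols X₀ X₁).mulVec) :
    IsUnit (((1 - hatMatrix X₀) * X₁)ᵀ * ((1 - hatMatrix X₀) * X₁)) := by
  rw [one_sub_hatMatrix_mul]
  exact isUnit_transpose_mul_self_of_mulVec_injective (mulVec_injective_sub_mul_of_fromCols _ h)

theorem hatMatrix_one_sub_hatMatrix_mul_mul_fromCols [CommRing R] (hX₀ : IsUnit (X₀ᵀ * X₀))
    (hV : IsUnit (((1 - hatMatrix X₀) * X₁)ᵀ * ((1 - hatMatrix X₀) * X₁))) :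
    hatMatrix ((1 - hatMatrix X₀) * X₁) * fromCols X₀ X₁ =
      (1 - hatMatrix X₀) * fromCols X₀ X₁ := by
  set Q := 1 - hatMatrix X₀
  have hVX₀ : (Q * X₁)ᵀ * X₀ = 0 := by
    rw [transpose_mul, transpose_one_sub_hatMatrix, Matrix.mul_assoc,
      one_sub_hatMatrix_mul_self hX₀, Matrix.mul_zero]
  have hVX₁ : (Q * X₁)ᵀ * X₁ = (Q * X₁)ᵀ * (Q * X₁) := by
    rw [transpose_mul, transpose_one_sub_hatMatrix, Matrix.mul_assoc, Matrix.mul_assoc,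
      ← Matrix.mul_assoc Q, one_sub_hatMatrix_mul_one_sub_hatMatrix hX₀]
  rw [mul_fromCols, mul_fromCols, hatMatrix_mul_of_transpose_mul_eq_zero hVX₀,
    hatMatrix_mul_of_transpose_mul_eq hV hVX₁, one_sub_hatMatrix_mul_self hX₀]

theorem hatMatrix_one_sub_hatMatrix_mul_eq [Field R] [LinearOrder R] [IsStrictOrderedRing R]
    (hinj : Function.Injective (fromCols X₀ X₁).mulVec)
    (hsurj : Function.Surjective (fromCols X₀ X₁).mulVec) :
    hatMatrix ((1 - hatMatrix X₀) * X₁) = 1 - hatMatrix X₀ :=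
  eq_of_mul_eq_mul_of_mulVec_surjective hsurj <| hatMatrix_one_sub_hatMatrix_mul_mul_fromCols
    (isUnit_transpose_mul_self_of_mulVec_injective (mulVec_injective_left_of_fromCols hinj))
    (isUnit_transpose_mul_self_one_sub_hatMatrix_mul hinj)

end Residual

end Matrix

theorem projected_design_captures_null_SSE_general
    (k0 k : ℕ)
    (X0 : Matrix (Fin (k0 + k)) (Fin k0) ℝ)
    (Xi : Matrix (Fin (k0 + k)) (Fin k) ℝ)
    (hrank : (Matrix.fromCols X0 Xi).rank = k0 + k) :
    IsUnit ((((1 : Matrix (Fin (k0 + k)) (Fin (k0 + k)) ℝ) -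
        X0 * (X0ᵀ * X0)⁻¹ * X0ᵀ) * Xi)ᵀ *
        (((1 : Matrix (Fin (k0 + k)) (Fin (k0 + k)) ℝ) -
        X0 * (X0ᵀ * X0)⁻¹ * X0ᵀ) * Xi)) ∧
    ∀ y : Fin (k0 + k) → ℝ,
      letI P0 : Matrix (Fin (k0 + k)) (Fin (k0 + k)) ℝ := X0 * (X0ᵀ * X0)⁻¹ * X0ᵀ
      letI V : Matrix (Fin (k0 + k)) (Fin k) ℝ := (1 - P0) * Xi
      y ⬝ᵥ ((V * (Vᵀ * V)⁻¹ * Vᵀ) *ᵥ y) = y ⬝ᵥ ((1 - P0) *ᵥ y) := by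
  have hinj : Function.Injective (fromCols X0 Xi).mulVec :=
    mulVec_injective_of_rank_eq_card (by simpa using hrank)
  have hsurj : Function.Surjective (fromCols X0 Xi).mulVec :=
    mulVec_surjective_of_rank_eq_card (by simpa using hrank)
  refine ⟨isUnit_transpose_mul_self_one_sub_hatMatrix_mul hinj, fun y => ?_⟩
  change y ⬝ᵥ (hatMatrix ((1 - hatMatrix X0) * Xi) *ᵥ y) = y ⬝ᵥ ((1 - hatMatrix X0) *ᵥ y)
  rw [hatMatrix_one_sub_hatMatrix_mul_eq hinj hsurj]

/-- Key fact of Appendix E of the paper: when the sample size equals the total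
number of regression parameters `k₀ + k`, the projection onto the column space
of `V = (I - P₀)Xᵢ` captures the full null residual sum of squares:
`VᵀV` is invertible and `yᵀV(VᵀV)⁻¹Vᵀy = yᵀ(I - P₀)y` for all `y`. -/
theorem projected_design_captures_null_SSE
    (k0 k : ℕ) (hk0 : 1 ≤ k0) (hk : 1 ≤ k)
    (X0 : Matrix (Fin (k0 + k)) (Fin k0) ℝ)
    (Xi : Matrix (Fin (k0 + k)) (Fin k) ℝ)
    (hrank : (Matrix.fromCols X0 Xi).rank = k0 + k) :
    IsUnit ((((1 : Matrix (Fin (k0 + k)) (Fin (k0 + k)) ℝ) -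
        X0 * (X0ᵀ * X0)⁻¹ * X0ᵀ) * Xi)ᵀ *
        (((1 : Matrix (Fin (k0 + k)) (Fin (k0 + k)) ℝ) -
        X0 * (X0ᵀ * X0)⁻¹ * X0ᵀ) * Xi)) ∧
    ∀ y : Fin (k0 + k) → ℝ,
      letI P0 : Matrix (Fin (k0 + k)) (Fin (k0 + k)) ℝ := X0 * (X0ᵀ * X0)⁻¹ * X0ᵀ
      letI V : Matrix (Fin (k0 + k)) (Fin k) ℝ := (1 - P0) * Xi
      y ⬝ᵥ ((V * (Vᵀ * V)⁻¹ * Vᵀ) *ᵥ y) = y ⬝ᵥ ((1 - P0) *ᵥ y) :=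
  projected_design_captures_null_SSE_general k0 k X0 Xi hrank
end

section
/- Let k ≥ 1, a > 0, s > 0 and n ≥ 1 with ρ(1+n) ≥ 1 for a real ρ > 0. Then ∫_{ρ(1+n)−1}^∞ (g+1)^{−k/2} · e^{s(1 − 1/(g+1))} · a(ρ(1+n))^a (g+1)^{−(a+1)} dg = a(ρ(1+n))^a · e^{s} · s^{−(a+k/2)} · (Γ(a + k/2) − Γ(a + k/2, s/(ρ(1+n)))), where Γ(ν_1, ν_2) = ∫_{ν_2}^∞ t^{ν_1−1} e^{−t} dt is the upper incomplete gamma function. -/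
open MeasureTheory Real

/-- The upper incomplete gamma function `Γ(ν₁, ν₂) = ∫_{ν₂}^∞ t^{ν₁-1} e^{-t} dt`. -/
noncomputable def upperIncompleteGamma (ν₁ ν₂ : ℝ) : ℝ :=
  ∫ t in Set.Ioi ν₂, t ^ (ν₁ - 1) * Real.exp (-t)

open Set

/-! With `u = g + 1`, `c = ρ(1+n)` and `ν = a + k/2`, the integrand is
`a c^a e^s · u^{-(ν+1)} e^{-s/u}` on `u > c`. The substitution `t = s/u`
(`du = s/t² dt`) maps `(c, ∞)` onto `(0, s/c)` and turns `u^{-(ν+1)} e^{-s/u} du`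
into `s^{-ν} t^{ν-1} e^{-t} dt`, whose integral over `(0, s/c)` is the lower incomplete
gamma function `Γ(ν) - Γ(ν, s/c)`. -/

section ChangeOfVariables

variable {E : Type*} [NormedAddCommGroup E] [NormedSpace ℝ E]

theorem integral_Ioi_comp_add_right (f : ℝ → E) (c d : ℝ) :
    ∫ x in Ioi c, f (x + d) = ∫ x in Ioi (c + d), f x := by
  have hderiv : ∀ x ∈ Ioi c, HasDerivWithinAt (fun x => x + d) 1 (Ioi c) x :=
    fun x _ => ((hasDerivAt_id x).add_const d).hasDerivWithinAt
  rw [← image_add_const_Ioi,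
    integral_image_eq_integral_abs_deriv_smul measurableSet_Ioi hderiv (add_left_injective d).injOn]
  simp only [abs_one, one_smul]

theorem integral_Ioi_eq_integral_Ioo_comp_div (f : ℝ → E) {s c : ℝ} (hs : 0 < s) (hc : 0 < c) :
    ∫ u in Ioi c, f u = ∫ t in Ioo 0 (s / c), (s / t ^ 2) • f (s / t) := by
  have hderiv : ∀ t ∈ Ioo 0 (s / c),
      HasDerivWithinAt (fun t => s / t) (-(s / t ^ 2)) (Ioo 0 (s / c)) t := by
    intro t ht
    simpa only [div_eq_mul_inv, mul_neg] using
      ((hasDerivAt_inv ht.1.ne').const_mul s).hasDerivWithinAt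
  have hinj : InjOn (fun t => s / t) (Ioo 0 (s / c)) := fun x hx y hy hxy =>
    inv_injective ((mul_right_inj' hs.ne').mp (by simpa only [div_eq_mul_inv] using hxy))
  have himage : (fun t => s / t) '' Ioo 0 (s / c) = Ioi c := by
    ext u
    constructor
    · rintro ⟨t, ⟨ht, hts⟩, rfl⟩
      exact (lt_div_iff₀ ht).mpr ((lt_div_iff₀' hc).mp hts)
    · intro hu
      have hu0 : 0 < u := hc.trans hu
      exact ⟨s / u, ⟨div_pos hs hu0, div_lt_div_of_pos_left hs hc hu⟩, div_div_cancel₀ hs.ne'⟩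
  rw [← himage, integral_image_eq_integral_abs_deriv_smul measurableSet_Ioo hderiv hinj]
  refine setIntegral_congr_fun measurableSet_Ioo fun t ht => ?_
  rw [abs_neg, abs_of_pos (div_pos hs (pow_pos ht.1 2))]

end ChangeOfVariables

theorem integral_Ioi_rpow_mul_exp_neg_div (ν : ℝ) {s c : ℝ} (hs : 0 < s) (hc : 0 < c) :
    ∫ u in Ioi c, u ^ (-(ν + 1)) * exp (-(s / u)) =
      s ^ (-ν) * ∫ t in Ioo 0 (s / c), t ^ (ν - 1) * exp (-t) := by
  rw [integral_Ioi_eq_integral_Ioo_comp_div _ hs hc, ← integral_const_mul]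
  refine setIntegral_congr_fun measurableSet_Ioo fun t ht => ?_
  have ht : 0 < t := ht.1
  have hpow : s / t ^ 2 * (s / t) ^ (-(ν + 1)) = s ^ (-ν) * t ^ (ν - 1) := by
    rw [rpow_neg (div_pos hs ht).le, div_rpow hs.le ht.le, rpow_neg hs.le, rpow_add hs, rpow_add ht,
      rpow_sub ht, rpow_one, rpow_one]
    field_simp
  rw [smul_eq_mul, div_div_cancel₀ hs.ne', ← mul_assoc, hpow, mul_assoc]

theorem integral_Ioo_eq_Gamma_sub_upperIncompleteGamma {ν x : ℝ} (hν : 0 < ν) (hx : 0 ≤ x) :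
    ∫ t in Ioo 0 x, t ^ (ν - 1) * exp (-t) = Gamma ν - upperIncompleteGamma ν x := by
  have hint : IntegrableOn (fun t => t ^ (ν - 1) * exp (-t)) (Ioi 0) := by
    simpa only [mul_comm] using GammaIntegral_convergent hν
  have hsplit := setIntegral_union Ioc_disjoint_Ioi_same measurableSet_Ioi
    (hint.mono_set Ioc_subset_Ioi_self) (hint.mono_set (Ioi_subset_Ioi hx))
  rw [Ioc_union_Ioi_eq_Ioi hx, integral_Ioc_eq_integral_Ioo] at hsplit
  rw [Gamma_eq_integral hν, upperIncompleteGamma]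
  simp only [mul_comm (exp _)]
  linarith

theorem knownSigma_bayesFactor_closed_form_general
    (k : ℝ) (hk : 1 ≤ k) (a : ℝ) (ha : 0 < a) (s : ℝ) (hs : 0 < s)
    (n : ℕ) (ρ : ℝ) (hρn : 1 ≤ ρ * (1 + (n : ℝ))) :
    (∫ g in Set.Ioi (ρ * (1 + (n : ℝ)) - 1),
        (g + 1) ^ (-k / 2) * Real.exp (s * (1 - 1 / (g + 1))) *
          (a * (ρ * (1 + (n : ℝ))) ^ a * (g + 1) ^ (-(a + 1)))) =
      a * (ρ * (1 + (n : ℝ))) ^ a * Real.exp s * s ^ (-(a + k / 2)) *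
        (Real.Gamma (a + k / 2) -
          upperIncompleteGamma (a + k / 2) (s / (ρ * (1 + (n : ℝ))))) := by
  set c := ρ * (1 + (n : ℝ))
  have hc : 0 < c := zero_lt_one.trans_le hρn
  have hν : 0 < a + k / 2 := by linarith
  have hintegrand : ∀ g ∈ Ioi (c - 1),
      (g + 1) ^ (-k / 2) * exp (s * (1 - 1 / (g + 1))) * (a * c ^ a * (g + 1) ^ (-(a + 1))) =
        a * c ^ a * exp s * ((g + 1) ^ (-(a + k / 2 + 1)) * exp (-(s / (g + 1)))) := by
    intro g hg
    have hg1 : 0 < g + 1 := by linarith [mem_Ioi.mp hg]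
    have hexp : s * (1 - 1 / (g + 1)) = s + -(s / (g + 1)) := by ring
    rw [hexp, exp_add, show -(a + k / 2 + 1) = -k / 2 + -(a + 1) by ring, rpow_add hg1]
    ring
  rw [setIntegral_congr_fun measurableSet_Ioi hintegrand, integral_const_mul,
    integral_Ioi_comp_add_right (fun u => u ^ (-(a + k / 2 + 1)) * exp (-(s / u))),
    sub_add_cancel, integral_Ioi_rpow_mul_exp_neg_div _ hs hc,
    integral_Ioo_eq_Gamma_sub_upperIncompleteGamma hν (div_pos hs hc).le]
  ring

/-- Closed-form evaluation of the Bayes factor in the known-`σ` variable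
selection problem under the robust prior with `b = 1`
(Section 3.6.2 of the paper). -/
theorem knownSigma_bayesFactor_closed_form
    (k : ℝ) (hk : 1 ≤ k) (a : ℝ) (ha : 0 < a) (s : ℝ) (hs : 0 < s)
    (n : ℕ) (hn : 1 ≤ n) (ρ : ℝ) (hρ : 0 < ρ) (hρn : 1 ≤ ρ * (1 + (n : ℝ))) :
    (∫ g in Set.Ioi (ρ * (1 + (n : ℝ)) - 1),
        (g + 1) ^ (-k / 2) * Real.exp (s * (1 - 1 / (g + 1))) *
          (a * (ρ * (1 + (n : ℝ))) ^ a * (g + 1) ^ (-(a + 1)))) =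
      a * (ρ * (1 + (n : ℝ))) ^ a * Real.exp s * s ^ (-(a + k / 2)) *
        (Real.Gamma (a + k / 2) -
          upperIncompleteGamma (a + k / 2) (s / (ρ * (1 + (n : ℝ))))) :=
  knownSigma_bayesFactor_closed_form_general k hk a ha s hs n ρ hρn
end
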